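/- Let f : ℝ → ℝ be infinitely differentiable and x ∈ ℝ a first-order critical point, i.e. f′(x) = 0 and f″(x) ≠ 0. Let d₀ = 1/10, d₁ = 6/10, d₂ = 3/10 and define, for small h > 0, the WENO-UD5 weights with exponent p = 2 and ε = 0: αₖ(h) = dₖ(1 + (ζ(h)/βₖ(h))²) (the WENO-LOC smoothness indicators βₖ(h) being nonzero for all sufficiently small h) and ωₖ(h) = αₖ(h)/(α₀(h)+α₁(h)+α₂(h)). Then for each k ∈ {0,1,2}, ωₖ(h) − dₖ = O(h⁴) as h → 0⁺; in particular the sufficient condition ωₖ − dₖ = O(h³) for fifth-order accuracy holds at first-order critical points. -/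

import Mathlib

open Filter Asymptotics Topology

/-- The WENO-LOC smoothness indicators of `f` at center `x` with mesh size `h`. -/
noncomputable def betaLOC (f : ℝ → ℝ) (x h : ℝ) : Fin 3 → ℝ :=
  ![(1/2) * ((f (x - h) - f (x - 2*h))^2 + (f x - f (x - h))^2)
      + (f x - 2 * f (x - h) + f (x - 2*h))^2,
    (1/2) * ((f x - f (x - h))^2 + (f (x + h) - f x)^2)
      + (f (x - h) - 2 * f x + f (x + h))^2,
    (1/2) * ((f (x + h) - f x)^2 + (f (x + 2*h) - f (x + h))^2)
      + (f x - 2 * f (x + h) + f (x + 2*h))^2]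

/-- The global smoothness indicator `ζ` of `f` at center `x` with mesh size `h`. -/
noncomputable def zetaUD (f : ℝ → ℝ) (x h : ℝ) : ℝ :=
  |(f (x - 2*h) - 2 * f (x - h) + f x)^2
    - 2 * (f (x - h) - 2 * f x + f (x + h))^2
    + (f x - 2 * f (x + h) + f (x + 2*h))^2|

/-- The linear (ideal) weights `d₀ = 1/10`, `d₁ = 6/10`, `d₂ = 3/10`. -/
noncomputable def dlin : Fin 3 → ℝ := ![1/10, 6/10, 3/10]

open scoped ContDiff

/-- MVT step: if `g 0 = 0` and `g' = O(u^k)` near `0`, then `g = O(u^(k+1))`. -/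
lemma weno_step {g g' : ℝ → ℝ} (hg : ∀ u, HasDerivAt g (g' u) u) (h0 : g 0 = 0) {k : ℕ}
    (hd : g' =O[𝓝 (0:ℝ)] fun u => u ^ k) :
    g =O[𝓝 (0:ℝ)] fun u => u ^ (k+1) := by
  obtain ⟨C, hC⟩ := hd.bound
  rw [Metric.eventually_nhds_iff] at hC
  obtain ⟨ε, hε, hball⟩ := hC
  rw [isBigO_iff]
  refine ⟨max C 0, ?_⟩
  rw [Metric.eventually_nhds_iff]
  refine ⟨ε, hε, fun u hu => ?_⟩
  have habs : ∀ t ∈ Set.uIcc (0:ℝ) u, ‖g' t‖ ≤ max C 0 * |u| ^ k := by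
    intro t ht
    have h1 : |t| ≤ |u| := by
      rcases Set.mem_uIcc.1 ht with ⟨ha, hb⟩ | ⟨ha, hb⟩ <;> rw [abs_le] <;>
        constructor <;> nlinarith [le_abs_self u, neg_abs_le u]
    have hdist : dist t 0 < ε := by
      simp only [dist_zero_right, Real.norm_eq_abs] at hu ⊢
      exact lt_of_le_of_lt h1 hu
    calc ‖g' t‖ ≤ C * ‖t ^ k‖ := hball hdist
      _ ≤ max C 0 * |u| ^ k := by
          rw [Real.norm_eq_abs, abs_pow]
          exact mul_le_mul (le_max_left _ _) (pow_le_pow_left₀ (abs_nonneg t) h1 k)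
            (by positivity) (le_max_right _ _)
  have hmvt := (convex_uIcc (0:ℝ) u).norm_image_sub_le_of_norm_hasDerivWithin_le
    (fun t _ => (hg t).hasDerivWithinAt) habs Set.left_mem_uIcc Set.right_mem_uIcc
  rw [h0, sub_zero, sub_zero] at hmvt
  calc ‖g u‖ ≤ max C 0 * |u| ^ k * ‖u‖ := hmvt
    _ = max C 0 * ‖u ^ (k+1)‖ := by
        rw [Real.norm_eq_abs, Real.norm_eq_abs, abs_pow, pow_succ]; ring

/-- Third-order Taylor expansion with `O(u⁴)` remainder, additive form. -/
lemma weno_taylor {f : ℝ → ℝ} (hf : ContDiff ℝ (⊤ : ℕ∞) f) (x : ℝ) :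
    (fun u => f (u + x) - (f x + deriv f x * u + iteratedDeriv 2 f x / 2 * u ^ 2
        + iteratedDeriv 3 f x / 6 * u ^ 3)) =O[𝓝 (0:ℝ)] fun u => u ^ 4 := by
  have hdn : ∀ n, ContDiff ℝ ∞ (iteratedDeriv n f) := fun n => by
    rw [iteratedDeriv_eq_iterate]; exact (hf.of_le (by simp)).iterate_deriv n
  have hshift : ∀ n u, HasDerivAt (fun v => iteratedDeriv n f (v + x))
      (iteratedDeriv (n+1) f (u + x)) u := by
    intro n u
    have h1 : HasDerivAt (iteratedDeriv n f) (iteratedDeriv (n+1) f (u+x)) (u+x) := by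
      rw [iteratedDeriv_succ]
      exact (((hdn n).differentiable (by simp)) (u+x)).hasDerivAt
    exact h1.comp_add_const u x
  set D2 := iteratedDeriv 2 f x with hD2
  set D3 := iteratedDeriv 3 f x with hD3
  have hq3 : (fun u => iteratedDeriv 3 f (u+x) - D3) =O[𝓝 (0:ℝ)] fun u => u ^ 1 := by
    have hdiff : DifferentiableAt ℝ (iteratedDeriv 3 f) x :=
      ((hdn 3).differentiable (by simp)) x
    have hten : Tendsto (fun u : ℝ => u + x) (𝓝 0) (𝓝 x) := by
      simpa using (continuous_add_right x).tendsto 0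
    have := hdiff.isBigO_sub.comp_tendsto hten
    simpa [Function.comp_def, pow_one] using this
  have hq2' : ∀ u, HasDerivAt (fun v => iteratedDeriv 2 f (v+x) - (D2 + D3 * v))
      (iteratedDeriv 3 f (u+x) - D3) u := by
    intro u
    have h2 : HasDerivAt (fun v : ℝ => D2 + D3 * v) D3 u := by
      simpa using ((hasDerivAt_id u).const_mul D3).const_add D2
    exact (hshift 2 u).sub h2
  have hq2 : (fun u => iteratedDeriv 2 f (u+x) - (D2 + D3 * u)) =O[𝓝 (0:ℝ)]
      fun u => u ^ 2 := weno_step hq2' (by simp [hD2]) hq3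
  have hq1' : ∀ u, HasDerivAt (fun v => deriv f (v+x) - (deriv f x + D2 * v + D3/2 * v^2))
      (iteratedDeriv 2 f (u+x) - (D2 + D3 * u)) u := by
    intro u
    have h1 : HasDerivAt (fun v => deriv f (v+x)) (iteratedDeriv 2 f (u+x)) u := by
      have := hshift 1 u
      simpa [iteratedDeriv_one] using this
    have h2 : HasDerivAt (fun v : ℝ => deriv f x + D2 * v + D3/2 * v^2) (D2 + D3 * u) u := by
      have := (((hasDerivAt_id u).const_mul D2).const_add (deriv f x)).add
        ((hasDerivAt_pow 2 u).const_mul (D3/2))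
      exact this.congr_deriv (by ring)
    exact h1.sub h2
  have hq1 : (fun u => deriv f (u+x) - (deriv f x + D2 * u + D3/2 * u^2)) =O[𝓝 (0:ℝ)]
      fun u => u ^ 3 := weno_step hq1' (by simp) hq2
  have hq0' : ∀ u, HasDerivAt
      (fun v => f (v+x) - (f x + deriv f x * v + D2/2 * v^2 + D3/6 * v^3))
      (deriv f (u+x) - (deriv f x + D2 * u + D3/2 * u^2)) u := by
    intro u
    have h1 : HasDerivAt (fun v => f (v+x)) (deriv f (u+x)) u := by
      have := hshift 0 u
      simpa [iteratedDeriv_one, iteratedDeriv_zero] using this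
    have h2 : HasDerivAt (fun v : ℝ => f x + deriv f x * v + D2/2 * v^2 + D3/6 * v^3)
        (deriv f x + D2 * u + D3/2 * u^2) u := by
      have := ((((hasDerivAt_id u).const_mul (deriv f x)).const_add (f x)).add
        ((hasDerivAt_pow 2 u).const_mul (D2/2))).add ((hasDerivAt_pow 3 u).const_mul (D3/6))
      exact this.congr_deriv (by ring)
    exact h1.sub h2
  exact weno_step hq0' (by simp) hq1

/-- `h^m = O(h^n)` near `0⁺` when `n ≤ m`. -/
lemma weno_pow_le {m n : ℕ} (hnm : n ≤ m) :
    (fun h : ℝ => h ^ m) =O[𝓝[>] (0:ℝ)] fun h => h ^ n := by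
  rw [isBigO_iff]
  refine ⟨1, ?_⟩
  filter_upwards [Ioc_mem_nhdsGT_of_mem (Set.mem_Ico.2 ⟨le_refl (0:ℝ), zero_lt_one⟩)] with h hh
  obtain ⟨h0, h1⟩ := hh
  rw [Real.norm_eq_abs, Real.norm_eq_abs, abs_of_pos (pow_pos h0 m),
    abs_of_pos (pow_pos h0 n), one_mul]
  exact pow_le_pow_of_le_one h0.le h1 hnm

/-- The main per-stencil estimate: `(ζ/β)² = O(h⁴)`. -/
lemma weno_theta {β W ζ : ℝ → ℝ} {D2 : ℝ} (hD2 : D2 ≠ 0)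
    (hβW : ∀ h : ℝ, 0 < h → (W h)^2 ≤ β h ∧ 0 ≤ β h)
    (hW : (fun h => W h - D2 * h^2) =O[𝓝[>] (0:ℝ)] fun h => h^3)
    (hζ : ζ =O[𝓝[>] (0:ℝ)] fun h => h^6) :
    (fun h => (ζ h / β h)^2) =O[𝓝[>] (0:ℝ)] fun h => h^4 := by
  obtain ⟨K, hK⟩ := hW.bound
  have h2 : ∀ᶠ h in 𝓝[>] (0:ℝ), K * h < |D2|/2 := by
    have ht : Tendsto (fun h : ℝ => K*h) (𝓝[>] (0:ℝ)) (𝓝 0) := by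
      have h1 : Tendsto (fun h : ℝ => K*h) (𝓝 (0:ℝ)) (𝓝 (K*0)) :=
        (continuous_const.mul continuous_id).tendsto 0
      rw [mul_zero] at h1
      exact h1.mono_left nhdsWithin_le_nhds
    exact ht.eventually_lt_const (by positivity)
  have hβlow : ∀ᶠ h in 𝓝[>] (0:ℝ), (|D2|/2)^2 * h^4 ≤ β h := by
    filter_upwards [hK, h2, self_mem_nhdsWithin] with h h1 h2' h3
    simp only [Set.mem_Ioi] at h3
    rw [Real.norm_eq_abs, Real.norm_eq_abs] at h1
    have e3 := abs_sub_abs_le_abs_sub (D2*h^2) (W h)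
    have e1 : |D2 * h ^ 2| = |D2| * h ^ 2 := by rw [abs_mul, abs_pow, abs_of_pos h3]
    have e2 : |h ^ 3| = h ^ 3 := by rw [abs_pow, abs_of_pos h3]
    have e4 : |D2 * h ^ 2 - W h| = |W h - D2 * h ^ 2| := abs_sub_comm _ _
    have e5 : K * h * h ^ 2 ≤ |D2| / 2 * h ^ 2 :=
      mul_le_mul_of_nonneg_right h2'.le (by positivity)
    have e6 : K * |h ^ 3| = K * h * h ^ 2 := by rw [e2]; ring
    have hlb : |D2| / 2 * h ^ 2 ≤ |W h| := by linarith
    have h6 : (|D2| / 2 * h ^ 2) ^ 2 ≤ |W h| ^ 2 :=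
      pow_le_pow_left₀ (by positivity) hlb 2
    rw [sq_abs] at h6
    calc (|D2|/2)^2*h^4 = (|D2| / 2 * h ^ 2) ^ 2 := by ring
      _ ≤ (W h)^2 := h6
      _ ≤ β h := (hβW h h3).1
  have hβ4 : (fun h : ℝ => h^4) =O[𝓝[>] (0:ℝ)] β := by
    rw [isBigO_iff]
    refine ⟨((|D2|/2)^2)⁻¹, ?_⟩
    filter_upwards [hβlow, self_mem_nhdsWithin] with h h1 h3
    simp only [Set.mem_Ioi] at h3
    rw [Real.norm_eq_abs, Real.norm_eq_abs, abs_of_pos (by positivity : (0:ℝ) < h^4),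
      abs_of_nonneg (hβW h h3).2]
    have hc : (0:ℝ) < (|D2|/2)^2 := by positivity
    calc h^4 = ((|D2|/2)^2)⁻¹ * ((|D2|/2)^2*h^4) := (inv_mul_cancel_left₀ (ne_of_gt hc) _).symm
      _ ≤ ((|D2|/2)^2)⁻¹ * β h := mul_le_mul_of_nonneg_left h1 (by positivity)
  have hβinv : (fun h => (β h)⁻¹) =O[𝓝[>] (0:ℝ)] fun h => (h^4)⁻¹ := by
    apply hβ4.inv_rev
    filter_upwards [self_mem_nhdsWithin] with h h3 hzero
    simp only [Set.mem_Ioi] at h3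
    exact absurd hzero (by positivity)
  have hdiv : (fun h => ζ h / β h) =O[𝓝[>] (0:ℝ)] fun h => h^2 := by
    have hm := hζ.mul hβinv
    refine hm.congr' (Eventually.of_forall fun h => (div_eq_mul_inv _ _).symm) ?_
    filter_upwards [self_mem_nhdsWithin] with h h3
    simp only [Set.mem_Ioi] at h3
    field_simp
  have hsq := hdiv.mul hdiv
  rw [show (fun h : ℝ => h^2*h^2) = fun h : ℝ => h^4 from funext fun h => by ring] at hsq
  exact hsq.congr_left fun h => by ring

/-- The exact algebraic identity for the weight deviation. -/
lemma weno_id2 (d t t0 t1 t2 : ℝ)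
    (hT : 1/10*(1+t0) + 6/10*(1+t1) + 3/10*(1+t2) ≠ 0) :
    d*(1+t) / (1/10*(1+t0) + 6/10*(1+t1) + 3/10*(1+t2)) - d
      = d*(t - (1/10*t0 + 6/10*t1 + 3/10*t2))
        / (1/10*(1+t0) + 6/10*(1+t1) + 3/10*(1+t2)) := by
  rw [div_sub' hT]
  congr 1
  ring

/-- Bounding the weight deviation through the exact algebraic identity. -/
lemma weno_frac {N T g : ℝ → ℝ} (hT : ∀ h, 1 ≤ T h) {c : ℝ} (hc : |c| ≤ 1)
    (hid : ∀ h, N h = c * g h / T h)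
    (hg : g =O[𝓝[>] (0:ℝ)] fun h => h^4) : N =O[𝓝[>] (0:ℝ)] fun h => h^4 := by
  refine IsBigO.trans ?_ hg
  rw [isBigO_iff]
  refine ⟨1, Eventually.of_forall fun h => ?_⟩
  rw [hid h, one_mul, Real.norm_eq_abs, Real.norm_eq_abs, abs_div, abs_mul,
    abs_of_pos (lt_of_lt_of_le one_pos (hT h))]
  have h1 : |c| * |g h| ≤ |g h| := by nlinarith [abs_nonneg (g h)]
  exact le_trans (div_le_self (by positivity) (hT h)) h1

/-- At a first-order critical point (`f′(x) = 0`, `f″(x) ≠ 0`), the WENO-UD5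
nonlinear weights with exponent `p = 2` and `ε = 0` converge to the linear
weights with fourth order of accuracy as `h → 0⁺`; in particular the sufficient
condition `ωₖ − dₖ = O(h³)` for fifth-order accuracy holds. -/
theorem wenoUD5_weights_p2_critical_fourth_order (f : ℝ → ℝ) (hf : ContDiff ℝ (⊤ : ℕ∞) f)
    (x : ℝ) (hx1 : deriv f x = 0) (hx2 : iteratedDeriv 2 f x ≠ 0)
    (hβ : ∀ k : Fin 3, ∀ᶠ h in 𝓝[>] (0:ℝ), betaLOC f x h k ≠ 0) :
    ∀ k : Fin 3,
      ((fun h : ℝ =>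
          (dlin k * (1 + (zetaUD f x h / betaLOC f x h k)^2))
            / (∑ l : Fin 3, dlin l * (1 + (zetaUD f x h / betaLOC f x h l)^2)) - dlin k)
        =O[𝓝[>] (0:ℝ)] fun h => h ^ 4)
      ∧ ((fun h : ℝ =>
          (dlin k * (1 + (zetaUD f x h / betaLOC f x h k)^2))
            / (∑ l : Fin 3, dlin l * (1 + (zetaUD f x h / betaLOC f x h l)^2)) - dlin k)
        =O[𝓝[>] (0:ℝ)] fun h => h ^ 3) := by
  set D2 := iteratedDeriv 2 f x with hD2def
  set D3 := iteratedDeriv 3 f x with hD3def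
  set R : ℝ → ℝ := fun u => f u - f x - D2/2*(u-x)^2 - D3/6*(u-x)^3 with hR_def
  -- Taylor remainder in centered form
  have hR : R =O[𝓝 x] fun u => (u-x)^4 := by
    have h1 := weno_taylor hf x
    have hten : Tendsto (fun u : ℝ => u - x) (𝓝 x) (𝓝 0) := by
      have := (continuous_sub_right x).tendsto x
      simpa using this
    have h2 := h1.comp_tendsto hten
    simp only [Function.comp_def, sub_add_cancel, hx1, zero_mul] at h2
    refine h2.congr_left fun u => ?_
    simp only [hR_def]
    ring
  -- remainder at each node
  have hnode : ∀ c : ℝ, (fun h : ℝ => R (x + c*h)) =O[𝓝[>] (0:ℝ)] fun h => h^4 := by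
    intro c
    have ht : Tendsto (fun h : ℝ => x + c*h) (𝓝 (0:ℝ)) (𝓝 x) := by
      have h1 : Tendsto (fun h : ℝ => x + c*h) (𝓝 (0:ℝ)) (𝓝 (x + c*0)) :=
        (continuous_const.add (continuous_const.mul continuous_id)).tendsto 0
      simpa using h1
    have h1 := hR.comp_tendsto ht
    simp only [Function.comp_def] at h1
    rw [show (fun h : ℝ => (x + c*h - x)^4) = fun h : ℝ => c^4 * h^4 from
      funext fun h => by ring] at h1
    exact (h1.trans ((isBigO_refl (fun h : ℝ => h^4) _).const_mul_left (c^4))).mono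
      nhdsWithin_le_nhds
  have hRm2 : (fun h : ℝ => R (x - 2*h)) =O[𝓝[>] (0:ℝ)] fun h => h^4 :=
    (hnode (-2)).congr_left fun h => by rw [show x + (-2:ℝ)*h = x - 2*h by ring]
  have hRm1 : (fun h : ℝ => R (x - h)) =O[𝓝[>] (0:ℝ)] fun h => h^4 :=
    (hnode (-1)).congr_left fun h => by rw [show x + (-1:ℝ)*h = x - h by ring]
  have hRp1 : (fun h : ℝ => R (x + h)) =O[𝓝[>] (0:ℝ)] fun h => h^4 :=
    (hnode 1).congr_left fun h => by rw [show x + (1:ℝ)*h = x + h by ring]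
  have hRp2 : (fun h : ℝ => R (x + 2*h)) =O[𝓝[>] (0:ℝ)] fun h => h^4 := hnode 2
  -- pointwise expansion of f
  have hfeq : ∀ u, f u = f x + D2/2*(u-x)^2 + D3/6*(u-x)^3 + R u := by
    intro u
    simp only [hR_def]
    ring
  -- second differences minus leading term
  have hWA : (fun h : ℝ => (f x - 2 * f (x - h) + f (x - 2*h)) - D2 * h^2)
      =O[𝓝[>] (0:ℝ)] fun h => h^3 := by
    have hbase : (fun h : ℝ => -D3*h^3 + (R (x - 2*h) - 2 * R (x - h)))
        =O[𝓝[>] (0:ℝ)] fun h => h^3 :=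
      (((isBigO_refl (fun h : ℝ => h^3) _).const_mul_left (-D3))).add
        ((hRm2.sub (hRm1.const_mul_left 2)).trans (weno_pow_le (by norm_num)))
    refine hbase.congr_left fun h => ?_
    rw [hfeq (x - 2*h), hfeq (x - h)]
    ring
  have hWB : (fun h : ℝ => (f (x - h) - 2 * f x + f (x + h)) - D2 * h^2)
      =O[𝓝[>] (0:ℝ)] fun h => h^3 := by
    have hbase : (fun h : ℝ => R (x - h) + R (x + h)) =O[𝓝[>] (0:ℝ)] fun h => h^3 :=
      (hRm1.add hRp1).trans (weno_pow_le (by norm_num))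
    refine hbase.congr_left fun h => ?_
    rw [hfeq (x - h), hfeq (x + h)]
    ring
  have hWC : (fun h : ℝ => (f x - 2 * f (x + h) + f (x + 2*h)) - D2 * h^2)
      =O[𝓝[>] (0:ℝ)] fun h => h^3 := by
    have hbase : (fun h : ℝ => D3*h^3 + (R (x + 2*h) - 2 * R (x + h)))
        =O[𝓝[>] (0:ℝ)] fun h => h^3 :=
      ((isBigO_refl (fun h : ℝ => h^3) _).const_mul_left D3).add
        ((hRp2.sub (hRp1.const_mul_left 2)).trans (weno_pow_le (by norm_num)))
    refine hbase.congr_left fun h => ?_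
    rw [hfeq (x + 2*h), hfeq (x + h)]
    ring
  -- components for ζ
  have hAB : (fun h : ℝ => (f (x - 2*h) - 2 * f (x - h) + f x)
      - (f (x - h) - 2 * f x + f (x + h))) =O[𝓝[>] (0:ℝ)] fun h => h^3 := by
    have hbase : (fun h : ℝ => -D3*h^3
        + ((R (x - 2*h) - 2 * R (x - h)) - (R (x - h) + R (x + h))))
        =O[𝓝[>] (0:ℝ)] fun h => h^3 :=
      ((isBigO_refl (fun h : ℝ => h^3) _).const_mul_left (-D3)).add
        (((hRm2.sub (hRm1.const_mul_left 2)).sub (hRm1.add hRp1)).trans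
          (weno_pow_le (by norm_num)))
    refine hbase.congr_left fun h => ?_
    rw [hfeq (x - 2*h), hfeq (x - h), hfeq (x + h)]
    ring
  have hCB : (fun h : ℝ => (f x - 2 * f (x + h) + f (x + 2*h))
      - (f (x - h) - 2 * f x + f (x + h))) =O[𝓝[>] (0:ℝ)] fun h => h^3 := by
    have hbase : (fun h : ℝ => D3*h^3
        + ((R (x + 2*h) - 2 * R (x + h)) - (R (x - h) + R (x + h))))
        =O[𝓝[>] (0:ℝ)] fun h => h^3 :=
      ((isBigO_refl (fun h : ℝ => h^3) _).const_mul_left D3).add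
        (((hRp2.sub (hRp1.const_mul_left 2)).sub (hRm1.add hRp1)).trans
          (weno_pow_le (by norm_num)))
    refine hbase.congr_left fun h => ?_
    rw [hfeq (x - h), hfeq (x + h), hfeq (x + 2*h)]
    ring
  have hB2 : (fun h : ℝ => f (x - h) - 2 * f x + f (x + h)) =O[𝓝[>] (0:ℝ)]
      fun h => h^2 := by
    have hbase : (fun h : ℝ => D2*h^2 + (R (x - h) + R (x + h)))
        =O[𝓝[>] (0:ℝ)] fun h => h^2 :=
      ((isBigO_refl (fun h : ℝ => h^2) _).const_mul_left D2).add
        ((hRm1.add hRp1).trans (weno_pow_le (by norm_num)))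
    refine hbase.congr_left fun h => ?_
    rw [hfeq (x - h), hfeq (x + h)]
    ring
  have hACB : (fun h : ℝ => (f (x - 2*h) - 2 * f (x - h) + f x)
      + (f x - 2 * f (x + h) + f (x + 2*h))
      - 2 * (f (x - h) - 2 * f x + f (x + h))) =O[𝓝[>] (0:ℝ)] fun h => h^4 := by
    have hbase : (fun h : ℝ => (R (x - 2*h) - 2 * R (x - h))
        + (R (x + 2*h) - 2 * R (x + h)) - 2 * (R (x - h) + R (x + h)))
        =O[𝓝[>] (0:ℝ)] fun h => h^4 :=
      ((hRm2.sub (hRm1.const_mul_left 2)).add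
        (hRp2.sub (hRp1.const_mul_left 2))).sub ((hRm1.add hRp1).const_mul_left 2)
    refine hbase.congr_left fun h => ?_
    rw [hfeq (x - 2*h), hfeq (x - h), hfeq (x + h), hfeq (x + 2*h)]
    ring
  -- the global indicator is O(h⁶)
  have hζ : (fun h : ℝ => zetaUD f x h) =O[𝓝[>] (0:ℝ)] fun h => h^6 := by
    have h1 := hAB.mul hAB
    have h2 := hCB.mul hCB
    have h3 := hB2.mul hACB
    rw [show (fun h : ℝ => h^3*h^3) = fun h : ℝ => h^6 from funext fun h => by ring] at h1 h2
    rw [show (fun h : ℝ => h^2*h^4) = fun h : ℝ => h^6 from funext fun h => by ring] at h3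
    have hE := (h1.add h2).add (h3.const_mul_left 2)
    have hE' := hE.congr_left (f₂ := fun h : ℝ =>
      (f (x - 2*h) - 2 * f (x - h) + f x)^2
        - 2 * (f (x - h) - 2 * f x + f (x + h))^2
        + (f x - 2 * f (x + h) + f (x + 2*h))^2) fun h => by ring
    have := (isBigO_norm_left (f' := fun h : ℝ =>
      (f (x - 2*h) - 2 * f (x - h) + f x)^2
        - 2 * (f (x - h) - 2 * f x + f (x + h))^2
        + (f x - 2 * f (x + h) + f (x + 2*h))^2)).2 hE'
    refine this.congr_left fun h => ?_
    rw [Real.norm_eq_abs]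
    rfl
  -- θ k = (ζ/βₖ)² = O(h⁴)
  have hθ0' : (fun h : ℝ => (zetaUD f x h / betaLOC f x h 0)^2)
      =O[𝓝[>] (0:ℝ)] fun h => h^4 := by
    refine weno_theta (W := fun h : ℝ => f x - 2 * f (x - h) + f (x - 2*h)) hx2 ?_ hWA hζ
    intro h _
    simp only [betaLOC, Matrix.cons_val_zero]
    exact ⟨le_add_of_nonneg_left (by positivity), by positivity⟩
  have hθ1' : (fun h : ℝ => (zetaUD f x h / betaLOC f x h 1)^2)
      =O[𝓝[>] (0:ℝ)] fun h => h^4 := by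
    refine weno_theta (W := fun h : ℝ => f (x - h) - 2 * f x + f (x + h)) hx2 ?_ hWB hζ
    intro h _
    simp only [betaLOC, Matrix.cons_val_one, Matrix.head_cons, Matrix.cons_val_zero]
    exact ⟨le_add_of_nonneg_left (by positivity), by positivity⟩
  have hθ2' : (fun h : ℝ => (zetaUD f x h / betaLOC f x h 2)^2)
      =O[𝓝[>] (0:ℝ)] fun h => h^4 := by
    refine weno_theta (W := fun h : ℝ => f x - 2 * f (x + h) + f (x + 2*h)) hx2 ?_ hWC hζ
    intro h _
    simp only [betaLOC, Matrix.cons_val_two, Matrix.tail_cons, Matrix.head_cons]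
    exact ⟨le_add_of_nonneg_left (by positivity), by positivity⟩
  have hθ : ∀ k : Fin 3, (fun h : ℝ => (zetaUD f x h / betaLOC f x h k)^2)
      =O[𝓝[>] (0:ℝ)] fun h => h^4 := by
    intro k
    fin_cases k
    exacts [hθ0', hθ1', hθ2']
  -- assemble the weights
  have hsum1 : ∀ t0 t1 t2 : ℝ, 0 ≤ t0 → 0 ≤ t1 → 0 ≤ t2 →
      (1:ℝ) ≤ 1/10*(1+t0) + 6/10*(1+t1) + 3/10*(1+t2) := by
    intro t0 t1 t2 h0 h1 h2
    nlinarith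
  have d0 : dlin 0 = 1/10 := rfl
  have d1 : dlin 1 = 6/10 := rfl
  have d2 : dlin 2 = 3/10 := rfl
  have hsum : ∀ h : ℝ,
      (1:ℝ) ≤ ∑ l : Fin 3, dlin l * (1 + (zetaUD f x h / betaLOC f x h l)^2) := by
    intro h
    rw [Fin.sum_univ_three, d0, d1, d2]
    exact hsum1 _ _ _ (sq_nonneg _) (sq_nonneg _) (sq_nonneg _)
  have hcomb : (fun h : ℝ => 1/10 * (zetaUD f x h / betaLOC f x h 0)^2
      + 6/10 * (zetaUD f x h / betaLOC f x h 1)^2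
      + 3/10 * (zetaUD f x h / betaLOC f x h 2)^2) =O[𝓝[>] (0:ℝ)] fun h => h^4 :=
    (((hθ 0).const_mul_left _).add ((hθ 1).const_mul_left _)).add ((hθ 2).const_mul_left _)
  intro k
  have hc : |dlin k| ≤ 1 := by
    fin_cases k <;> rw [abs_le] <;> constructor <;> norm_num [dlin]
  have H4 : (fun h : ℝ =>
      (dlin k * (1 + (zetaUD f x h / betaLOC f x h k)^2))
        / (∑ l : Fin 3, dlin l * (1 + (zetaUD f x h / betaLOC f x h l)^2)) - dlin k)
      =O[𝓝[>] (0:ℝ)] fun h => h ^ 4 := by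
    refine weno_frac
      (T := fun h => ∑ l : Fin 3, dlin l * (1 + (zetaUD f x h / betaLOC f x h l)^2))
      hsum hc (fun h => ?_) ((hθ k).sub hcomb)
    beta_reduce
    rw [Fin.sum_univ_three, d0, d1, d2]
    exact weno_id2 _ _ _ _ _
      (ne_of_gt (lt_of_lt_of_le one_pos
        (hsum1 _ _ _ (sq_nonneg _) (sq_nonneg _) (sq_nonneg _))))
  exact ⟨H4, H4.trans (weno_pow_le (by norm_num))⟩
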